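/- The operator T_θ on H ⊕ ℂ is self-adjoint (with respect to the Hilbert adjoint) if and only if exp(iθ) ∈ {1, −1}, U ξ = ξ, and U is self-adjoint (equivalently, U is a unitary involution: U ∘ U = identity). -/

import Mathlib

/-!
Write `c = e^{iθ}`. The operator `T` is the block operator
`(x, z) ↦ (B x + z • v, ⟪w, x⟫ + α z)` with `B = c • U A`, `v = c • U ξ`, `w = conj c • ξ` and
`α = c a`, and such a block operator is symmetric iff `B` is, `v = w` and `α` is real.
As `a > 0` and `|c| = 1`, `α` is real iff `c = ±1`; then `v = w` says `U ξ = ξ`, and in that case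
`U A = U + r |ξ⟩⟨ξ|` with `r = (a - 1) / ‖ξ‖²` real, which is self-adjoint iff `U` is.
-/

open scoped InnerProductSpace

noncomputable section

variable {H : Type*} [NormedAddCommGroup H] [InnerProductSpace ℂ H]

/-- The vector `(x, z)` of the Hilbert space direct sum `H ⊕ ℂ`. -/
def mkE (x : H) (z : ℂ) : WithLp 2 (H × ℂ) := (WithLp.equiv 2 (H × ℂ)).symm (x, z)

open InnerProductSpace ContinuousLinearMap

lemma inner_mkE (x y : H) (z w : ℂ) :
    ⟪mkE x z, mkE y w⟫_ℂ = ⟪x, y⟫_ℂ + starRingEnd ℂ z * w := by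
  simp [mkE, RCLike.inner_apply]; ring

lemma smul_mkE (c : ℂ) (x : H) (z : ℂ) : c • mkE x z = mkE (c • x) (c * z) := rfl

lemma LinearMap.isSymmetric_iff_of_apply_mkE {T : WithLp 2 (H × ℂ) →ₗ[ℂ] WithLp 2 (H × ℂ)}
    {B : H →ₗ[ℂ] H} {v w : H} {α : ℂ}
    (hT : ∀ x z, T (mkE x z) = mkE (B x + z • v) (⟪w, x⟫_ℂ + α * z)) :
    T.IsSymmetric ↔ B.IsSymmetric ∧ v = w ∧ starRingEnd ℂ α = α := by
  have hdefect : ∀ x y z u, ⟪T (mkE x z), mkE y u⟫_ℂ - ⟪mkE x z, T (mkE y u)⟫_ℂ =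
      (⟪B x, y⟫_ℂ - ⟪x, B y⟫_ℂ) + starRingEnd ℂ z * (⟪v, y⟫_ℂ - ⟪w, y⟫_ℂ)
        + u * (⟪x, w⟫_ℂ - ⟪x, v⟫_ℂ) + (starRingEnd ℂ α - α) * starRingEnd ℂ z * u := by
    intro x y z u
    simp only [hT, inner_mkE, inner_add_left, inner_add_right, inner_smul_left, inner_smul_right,
      map_add, map_mul, inner_conj_symm]
    ring
  have hsymm : T.IsSymmetric ↔
      ∀ x y z u, ⟪T (mkE x z), mkE y u⟫_ℂ = ⟪mkE x z, T (mkE y u)⟫_ℂ :=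
    ⟨fun h x y z u ↦ h _ _, fun h p q ↦ h p.fst q.fst p.snd q.snd⟩
  simp only [hsymm, ← sub_eq_zero (a := ⟪T _, _⟫_ℂ), hdefect]
  constructor
  · intro h
    refine ⟨fun x y ↦ sub_eq_zero.mp (by simpa using h x y 0 0), ?_, ?_⟩
    · exact ext_inner_right ℂ fun y ↦ sub_eq_zero.mp (by simpa using h 0 y 1 0)
    · exact sub_eq_zero.mp (by simpa using h 0 0 1 1)
  · rintro ⟨hB, rfl, hα⟩ x y z u
    simp [hB x y, hα]

lemma Complex.conj_eq_self_iff_of_norm_eq_one {c : ℂ} (hc : ‖c‖ = 1) :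
    starRingEnd ℂ c = c ↔ c = 1 ∨ c = -1 := by
  constructor
  · intro h
    obtain ⟨r, rfl⟩ := Complex.conj_eq_iff_real.mp h
    rw [Complex.norm_real, Real.norm_eq_abs] at hc
    rcases (abs_eq zero_le_one).mp hc with h | h <;> simp [h]
  · rintro (rfl | rfl) <;> simp

section RCLike

variable {𝕜 E : Type*} [RCLike 𝕜] [NormedAddCommGroup E] [InnerProductSpace 𝕜 E]

lemma LinearMap.isSymmetric_add_iff_left {S T : E →ₗ[𝕜] E} (hS : S.IsSymmetric) :
    (T + S).IsSymmetric ↔ T.IsSymmetric :=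
  ⟨fun h ↦ by simpa using h.sub hS, fun h ↦ h.add hS⟩

lemma LinearMap.isSymmetric_smul_iff {c : 𝕜} (hc : starRingEnd 𝕜 c = c) (hc0 : c ≠ 0)
    {T : E →ₗ[𝕜] E} : (c • T).IsSymmetric ↔ T.IsSymmetric :=
  ⟨fun h ↦ by simpa [smul_smul, hc0] using h.smul (c := c⁻¹) (by simp [hc]), fun h ↦ h.smul hc⟩

lemma isSymmetric_comp_one_add_smul_rankOne_iff {U : E →L[𝕜] E} {ξ : E} (hUξ : U ξ = ξ)
    {r : 𝕜} (hr : starRingEnd 𝕜 r = r) :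
    ((U ∘L (1 + r • rankOne 𝕜 ξ ξ) : E →L[𝕜] E) : E →ₗ[𝕜] E).IsSymmetric ↔
      (U : E →ₗ[𝕜] E).IsSymmetric := by
  have hUK : U ∘L (1 + r • rankOne 𝕜 ξ ξ) = U + r • rankOne 𝕜 ξ ξ := by
    ext x
    simp [hUξ]
  rw [hUK, toLinearMap_add, toLinearMap_smul,
    LinearMap.isSymmetric_add_iff_left ((isSymmetric_rankOne_self ξ).smul hr)]

end RCLike

-- The paper's `⟨x, ξ⟩` is `⟪ξ, x⟫_ℂ` in Mathlib's convention.
theorem stmt14_general [CompleteSpace H]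
    (ξ : H) (a : ℝ) (ha : a = Real.sqrt (1 + ‖ξ‖ ^ 2))
    (A : H →L[ℂ] H)
    (hA : ∀ x : H, A x = x + ((((a - 1) / ‖ξ‖ ^ 2 : ℝ) : ℂ) * ⟪ξ, x⟫_ℂ) • ξ)
    (U : H →L[ℂ] H) (θ : ℝ)
    (T : WithLp 2 (H × ℂ) →L[ℂ] WithLp 2 (H × ℂ))
    (hT : ∀ (x : H) (z : ℂ),
      T (mkE x z) =
        Complex.exp (θ * Complex.I) • mkE (U (A x) + z • U ξ) (⟪ξ, x⟫_ℂ + (a : ℂ) * z)) :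
    IsSelfAdjoint T ↔
      (Complex.exp (θ * Complex.I) = 1 ∨ Complex.exp (θ * Complex.I) = -1) ∧
        U ξ = ξ ∧ IsSelfAdjoint U := by
  set c := Complex.exp (θ * Complex.I)
  have hc0 : c ≠ 0 := Complex.exp_ne_zero _
  have ha0 : (a : ℂ) ≠ 0 := by rw [ha]; norm_cast; positivity
  have hA' : A = 1 + (((a - 1) / ‖ξ‖ ^ 2 : ℝ) : ℂ) • rankOne ℂ ξ ξ := by
    ext x
    simp [hA, mul_smul]
  have hblock : ∀ x z, (T : WithLp 2 (H × ℂ) →ₗ[ℂ] WithLp 2 (H × ℂ)) (mkE x z) =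
      mkE ((c • (U ∘L A) : H →L[ℂ] H) x + z • (c • U ξ))
        (⟪starRingEnd ℂ c • ξ, x⟫_ℂ + (c * a) * z) := by
    intro x z
    rw [coe_coe, hT, smul_mkE]
    simp only [smul_apply, comp_apply, smul_add, smul_comm c z, inner_smul_left,
      Complex.conj_conj, mul_add, mul_assoc]
  have hUA : starRingEnd ℂ c = c → U ξ = ξ →
      (((c • (U ∘L A) : H →L[ℂ] H) : H →ₗ[ℂ] H).IsSymmetric ↔ (U : H →ₗ[ℂ] H).IsSymmetric) := by
    intro hcc hUξ
    rw [toLinearMap_smul, LinearMap.isSymmetric_smul_iff hcc hc0, hA',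
      isSymmetric_comp_one_add_smul_rankOne_iff hUξ (Complex.conj_ofReal _)]
  rw [isSelfAdjoint_iff_isSymmetric, LinearMap.isSymmetric_iff_of_apply_mkE hblock,
    isSelfAdjoint_iff_isSymmetric, map_mul, Complex.conj_ofReal, mul_left_inj' ha0,
    ← Complex.conj_eq_self_iff_of_norm_eq_one (Complex.norm_exp_ofReal_mul_I θ)]
  constructor
  · rintro ⟨hS, hv, hcc⟩
    rw [hcc, smul_right_inj hc0] at hv
    exact ⟨hcc, hv, (hUA hcc hv).mp hS⟩
  · rintro ⟨hcc, hUξ, hU⟩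
    exact ⟨(hUA hcc hUξ).mpr hU, by rw [hcc, hUξ], hcc⟩

/-- With `ξ ≠ 0`, `a = √(1 + ‖ξ‖²)`, `A x = x + ((a−1)/‖ξ‖²)·⟨x,ξ⟩·ξ`, `U` unitary, `θ ∈ ℝ`,
and `T_θ(x,z) = e^{iθ}·(U(A x) + z·U ξ, ⟨x,ξ⟩ + a·z)`: the operator `T_θ` is self-adjoint iff
`e^{iθ} ∈ {1, −1}`, `U ξ = ξ` and `U` is self-adjoint (equivalently, a unitary involution).
(The paper's inner product `⟨x,y⟩` is linear in the first slot, i.e. `⟪y,x⟫_ℂ` in Mathlib's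
convention.) -/
theorem stmt14 [CompleteSpace H]
    (ξ : H) (hξ : ξ ≠ 0) (a : ℝ) (ha : a = Real.sqrt (1 + ‖ξ‖ ^ 2))
    (A : H →L[ℂ] H)
    (hA : ∀ x : H, A x = x + ((((a - 1) / ‖ξ‖ ^ 2 : ℝ) : ℂ) * ⟪ξ, x⟫_ℂ) • ξ)
    (U : H →L[ℂ] H) (hU : U ∈ unitary (H →L[ℂ] H)) (θ : ℝ)
    (T : WithLp 2 (H × ℂ) →L[ℂ] WithLp 2 (H × ℂ))
    (hT : ∀ (x : H) (z : ℂ),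
      T (mkE x z) =
        Complex.exp (θ * Complex.I) • mkE (U (A x) + z • U ξ) (⟪ξ, x⟫_ℂ + (a : ℂ) * z)) :
    IsSelfAdjoint T ↔
      (Complex.exp (θ * Complex.I) = 1 ∨ Complex.exp (θ * Complex.I) = -1) ∧
        U ξ = ξ ∧ IsSelfAdjoint U :=
  stmt14_general ξ a ha A hA U θ T hT

end
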